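/- arXiv:1402.0911 — 4 statements merged into one kernel-verified Lean document; each statement's English description precedes it below -/
import Mathlib

section
/- Let π_1, …, π_n (n ≥ 1) be policies, let W(s) = max_{1 ≤ i ≤ n} V^{π_i}(s), and let Π_ps be the switching policy defined by Π_ps(s) = π_{i*(s)}(s) where i*(s) is an index attaining max_{1 ≤ i ≤ n} V^{π_i}(s). Then W(s) ≤ (T_{Π_ps} W)(s) for every state s; that is, the pointwise maximum of the value functions is a subsolution of the Bellman operator of the switching policy. -/
/-- The Bellman operator for policy `π`:
`(T_π f)(s) = R(s) + β · Σ_{s'} P(s, π(s))(s') · f(s')`. -/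
noncomputable def bellman {S A : Type*} (P : S → A → PMF S) (R : S → ℝ) (β : ℝ)
    (π : S → A) (f : S → ℝ) : S → ℝ :=
  fun s => R s + β * ∑' s', ((P s (π s)) s').toReal * f s'

/-! At the maximising index `i*(s)` we have `W(s) = V^{π_{i*(s)}}(s) = (T_{π_{i*(s)}} V^{π_{i*(s)}})(s)`,
and this only involves the action `π_{i*(s)}(s) = Π_ps(s)`. Replacing `V^{π_{i*(s)}}` by the
larger function `W` inside the expectation can only increase the value, since the Bellman
operator is monotone for `β ≥ 0`. -/

lemma PMF.summable_toReal_mul_of_abs_le {α : Type*} (p : PMF α) {f : α → ℝ} {C : ℝ}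
    (hC : ∀ a, |f a| ≤ C) : Summable fun a => (p a).toReal * f a := by
  have hp : Summable fun a => (p a).toReal := ENNReal.summable_toReal (by simp [p.tsum_coe])
  refine Summable.of_abs <| (hp.mul_right C).of_nonneg_of_le (fun a => abs_nonneg _) fun a => ?_
  rw [abs_mul, abs_of_nonneg ENNReal.toReal_nonneg]
  exact mul_le_mul_of_nonneg_left (hC a) ENNReal.toReal_nonneg

lemma exists_abs_le_of_selection {ι S : Type*} [Finite ι] {f : ι → S → ℝ}
    (hf : ∀ i, ∃ C : ℝ, ∀ s, |f i s| ≤ C) (σ : S → ι) :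
    ∃ C : ℝ, ∀ s, |f (σ s) s| ≤ C := by
  choose C hC using hf
  obtain ⟨M, hM⟩ := (Set.finite_range C).bddAbove
  exact ⟨M, fun s => (hC _ s).trans (hM ⟨σ s, rfl⟩)⟩

section Bellman

variable {S A : Type*} (P : S → A → PMF S) (R : S → ℝ)

lemma bellman_apply_congr_policy (β : ℝ) {π π' : S → A} {s : S} (h : π s = π' s) (f : S → ℝ) :
    bellman P R β π f s = bellman P R β π' f s := by
  simp only [bellman, h]

lemma bellman_apply_mono {β : ℝ} (hβ : 0 ≤ β) (π : S → A) {f g : S → ℝ}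
    (hf : ∃ C : ℝ, ∀ s, |f s| ≤ C) (hg : ∃ C : ℝ, ∀ s, |g s| ≤ C) (hfg : f ≤ g) (s : S) :
    bellman P R β π f s ≤ bellman P R β π g s := by
  obtain ⟨C, hC⟩ := hf
  obtain ⟨D, hD⟩ := hg
  unfold bellman
  gcongr _ + β * ?_
  exact Summable.tsum_le_tsum (fun s' => mul_le_mul_of_nonneg_left (hfg s') ENNReal.toReal_nonneg)
    ((P s (π s)).summable_toReal_mul_of_abs_le hC) ((P s (π s)).summable_toReal_mul_of_abs_le hD)

end Bellman

theorem max_value_subsolution_of_switching_bellman_general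
    {S A : Type*}
    (P : S → A → PMF S) (R : S → ℝ)
    (β : ℝ) (hβ0 : 0 ≤ β)
    (n : ℕ) (π : Fin n → S → A)
    (V : Fin n → S → ℝ)
    (hVbdd : ∀ i, ∃ C : ℝ, ∀ s, |V i s| ≤ C)
    (hVfix : ∀ i s, V i s = bellman P R β (π i) (V i) s)
    (istar : S → Fin n)
    (histar : ∀ s i, V i s ≤ V (istar s) s)
    (W : S → ℝ) (hW : ∀ s, W s = V (istar s) s)
    (pps : S → A) (hPps : ∀ s, pps s = π (istar s) s) :
    ∀ s, W s ≤ bellman P R β pps W s := by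
  have hWbdd : ∃ C : ℝ, ∀ s, |W s| ≤ C := by
    simpa only [hW] using exists_abs_le_of_selection hVbdd istar
  have hVW : ∀ i, V i ≤ W := fun i s => (histar s i).trans_eq (hW s).symm
  intro s
  calc W s = bellman P R β (π (istar s)) (V (istar s)) s := (hW s).trans (hVfix _ s)
    _ = bellman P R β pps (V (istar s)) s := bellman_apply_congr_policy P R β (hPps s).symm _
    _ ≤ bellman P R β pps W s := bellman_apply_mono P R hβ0 pps (hVbdd _) hWbdd (hVW _) s

/-- Let `π_1, …, π_n` (`n ≥ 1`) be policies with value functions `V^{π_i}` (the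
bounded fixed points of the respective Bellman operators), let
`W(s) = max_i V^{π_i}(s)`, and let `Π_ps(s) = π_{i*(s)}(s)` where `i*(s)` attains
the maximum `max_i V^{π_i}(s)`. Then `W(s) ≤ (T_{Π_ps} W)(s)` for every state `s`:
the pointwise maximum of the value functions is a subsolution of the Bellman
operator of the switching policy. -/
theorem max_value_subsolution_of_switching_bellman
    {S A : Type*} [Nonempty S] [Nonempty A]
    (P : S → A → PMF S) (R : S → ℝ)
    (β : ℝ) (hβ0 : 0 ≤ β) (hβ1 : β < 1)
    (n : ℕ) (hn : 1 ≤ n) (π : Fin n → S → A)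
    (V : Fin n → S → ℝ)
    (hVbdd : ∀ i, ∃ C : ℝ, ∀ s, |V i s| ≤ C)
    (hVfix : ∀ i s, V i s = bellman P R β (π i) (V i) s)
    (istar : S → Fin n)
    (histar : ∀ s i, V i s ≤ V (istar s) s)
    (W : S → ℝ) (hW : ∀ s, W s = V (istar s) s)
    (pps : S → A) (hPps : ∀ s, pps s = π (istar s) s) :
    ∀ s, W s ≤ bellman P R β pps W s :=
  max_value_subsolution_of_switching_bellman_general P R β hβ0 n π V hVbdd hVfix istar histar W hW
    pps hPps
end

section
/- (Policy switching theorem, Theorem 1.) Let π_1, …, π_n (n ≥ 1) be policies and let Π_ps be the switching policy defined by Π_ps(s) = π_{i*(s)}(s), where i*(s) is an index attaining max_{1 ≤ i ≤ n} V^{π_i}(s). Then for every state s, V^{Π_ps}(s) ≥ max_{1 ≤ i ≤ n} V^{π_i}(s); that is, the value of the switching policy at every state is at least the value of the best policy in the set at that state. -/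
lemma summable_pmf_mul {S : Type*} (p : PMF S) (f : S → ℝ) (C : ℝ)
    (hf : ∀ s, |f s| ≤ C) : Summable (fun s => (p s).toReal * f s) := by
  have hp : Summable (fun s => (p s).toReal) :=
    ENNReal.summable_toReal (by simp [p.tsum_coe])
  apply Summable.of_abs
  refine Summable.of_nonneg_of_le (fun s => abs_nonneg _) ?_ (hp.mul_right C)
  intro s
  rw [abs_mul, abs_of_nonneg ENNReal.toReal_nonneg]
  exact mul_le_mul_of_nonneg_left (hf s) ENNReal.toReal_nonneg

lemma tsum_pmf_toReal {S : Type*} (p : PMF S) : ∑' s, (p s).toReal = 1 := by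
  rw [← ENNReal.tsum_toReal_eq (fun s => p.apply_ne_top s), p.tsum_coe]
  simp

/-- Policy switching theorem: let `π_1, …, π_n` (`n ≥ 1`) be policies with value
functions `V^{π_i}` (the bounded fixed points of the respective Bellman operators),
and let `Π_ps(s) = π_{i*(s)}(s)` where `i*(s)` attains `max_i V^{π_i}(s)`. Then the
value function `V^{Π_ps}` of the switching policy satisfies
`V^{Π_ps}(s) ≥ max_i V^{π_i}(s)` at every state `s`. -/
theorem policy_switching_dominates
    {S A : Type*} [Nonempty S] [Nonempty A]
    (P : S → A → PMF S) (R : S → ℝ)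
    (β : ℝ) (hβ0 : 0 ≤ β) (hβ1 : β < 1)
    (n : ℕ) (hn : 1 ≤ n) (π : Fin n → S → A)
    (V : Fin n → S → ℝ)
    (hVbdd : ∀ i, ∃ C : ℝ, ∀ s, |V i s| ≤ C)
    (hVfix : ∀ i s, V i s = bellman P R β (π i) (V i) s)
    (istar : S → Fin n)
    (histar : ∀ s i, V i s ≤ V (istar s) s)
    (pps : S → A) (hpps : ∀ s, pps s = π (istar s) s)
    (Vps : S → ℝ) (hVpsbdd : ∃ C : ℝ, ∀ s, |Vps s| ≤ C)
    (hVpsfix : ∀ s, Vps s = bellman P R β pps Vps s) :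
    ∀ s, ∀ i, V i s ≤ Vps s := by
  classical
  obtain ⟨Cp, hCp⟩ := hVpsbdd
  choose Cv hCv using hVbdd
  have s₀ : S := Classical.arbitrary S
  have hCvnn : ∀ i, 0 ≤ Cv i := fun i => (abs_nonneg _).trans (hCv i s₀)
  set W : S → ℝ := fun s => V (istar s) s with hWdef
  set CW : ℝ := ∑ i, Cv i with hCWdef
  have hWbdd : ∀ s, |W s| ≤ CW := by
    intro s
    refine (hCv (istar s) s).trans ?_
    exact Finset.single_le_sum (fun i _ => hCvnn i) (Finset.mem_univ _)
  set g : S → ℝ := fun s => W s - Vps s with hgdef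
  have hgbdd : ∀ s, |g s| ≤ CW + Cp := by
    intro s
    calc |W s - Vps s| ≤ |W s| + |Vps s| := abs_sub _ _
      _ ≤ CW + Cp := add_le_add (hWbdd s) (hCp s)
  have hrne : (Set.range g).Nonempty := Set.range_nonempty g
  have hbdd : BddAbove (Set.range g) := by
    refine ⟨CW + Cp, ?_⟩
    rintro _ ⟨s, rfl⟩
    exact (le_abs_self _).trans (hgbdd s)
  set M : ℝ := sSup (Set.range g) with hMdef
  have hgM : ∀ s, g s ≤ M := fun s => le_csSup hbdd ⟨s, rfl⟩
  -- key inequality: g s ≤ β * M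
  have hkey : ∀ s, g s ≤ β * M := by
    intro s
    set p : PMF S := P s (pps s) with hpdef
    have hW' : ∀ s', |W s'| ≤ CW := hWbdd
    have hsumW : Summable (fun s' => (p s').toReal * V (istar s) s') :=
      summable_pmf_mul p _ (Cv (istar s)) (hCv (istar s))
    have hsumP : Summable (fun s' => (p s').toReal * Vps s') :=
      summable_pmf_mul p _ Cp hCp
    have hsumWW : Summable (fun s' => (p s').toReal * W s') :=
      summable_pmf_mul p _ CW hWbdd
    have hsumM : Summable (fun s' => (p s').toReal * M) :=
      (ENNReal.summable_toReal (by simp [p.tsum_coe])).mul_right M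
    have hVs : V (istar s) s = R s + β * ∑' s', (p s').toReal * V (istar s) s' := by
      have := hVfix (istar s) s
      rw [this, bellman]
      simp [hpdef, hpps s]
    have hVpss : Vps s = R s + β * ∑' s', (p s').toReal * Vps s' := by
      rw [hVpsfix s, bellman]
    have h1 : g s = β * (∑' s', (p s').toReal * V (istar s) s'
        - ∑' s', (p s').toReal * Vps s') := by
      simp only [hgdef, hWdef]
      rw [hVs, hVpss]; ring
    have h2 : ∑' s', (p s').toReal * V (istar s) s' ≤ ∑' s', (p s').toReal * W s' := by
      refine Summable.tsum_le_tsum (fun s' => ?_) hsumW hsumWW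
      exact mul_le_mul_of_nonneg_left (histar s' (istar s)) ENNReal.toReal_nonneg
    have h3 : ∑' s', (p s').toReal * W s' - ∑' s', (p s').toReal * Vps s'
        = ∑' s', (p s').toReal * g s' := by
      rw [← Summable.tsum_sub hsumWW hsumP]
      congr 1; ext s'; simp [hgdef]; ring
    have h4 : ∑' s', (p s').toReal * g s' ≤ M := by
      have := Summable.tsum_le_tsum (f := fun s' => (p s').toReal * g s')
        (g := fun s' => (p s').toReal * M)
        (fun s' => mul_le_mul_of_nonneg_left (hgM s') ENNReal.toReal_nonneg)
        (summable_pmf_mul p g (CW + Cp) hgbdd) hsumM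
      rwa [tsum_mul_right, tsum_pmf_toReal, one_mul] at this
    calc g s = β * (∑' s', (p s').toReal * V (istar s) s'
        - ∑' s', (p s').toReal * Vps s') := h1
      _ ≤ β * (∑' s', (p s').toReal * g s') := by
          apply mul_le_mul_of_nonneg_left _ hβ0
          rw [← h3]; linarith
      _ ≤ β * M := mul_le_mul_of_nonneg_left h4 hβ0
  have hMle : M ≤ β * M := csSup_le hrne (by rintro _ ⟨s, rfl⟩; exact hkey s)
  have hM0 : M ≤ 0 := by nlinarith
  intro s i
  have : g s ≤ 0 := (hgM s).trans hM0
  have hWs : W s ≤ Vps s := by simpa [hgdef] using this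
  exact (histar s i).trans hWs
end

section
/- (Existence of an optimal policy.) Suppose the state type S and the action type A are finite and nonempty. Then there exists a policy π* : S → A such that for every policy π : S → A and every state s, V^{π*}(s) ≥ V^π(s). -/
lemma pmf_sum_toReal_eq_one {S : Type*} [Fintype S] (p : PMF S) :
    ∑ s, (p s).toReal = 1 := by
  have h : ∑' s, p s = 1 := p.tsum_coe
  rw [tsum_fintype] at h
  have := congrArg ENNReal.toReal h
  rwa [ENNReal.toReal_sum (fun s _ => p.apply_ne_top s)] at this

lemma bellman_mono {S A : Type*} [Fintype S] (P : S → A → PMF S) (R : S → ℝ)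
    {β : ℝ} (hβ0 : 0 ≤ β) (π : S → A) {f h : S → ℝ} (hfh : ∀ s, f s ≤ h s) (s : S) :
    bellman P R β π f s ≤ bellman P R β π h s := by
  unfold bellman
  rw [tsum_fintype, tsum_fintype]
  have hsum : ∑ s', ((P s (π s)) s').toReal * f s' ≤ ∑ s', ((P s (π s)) s').toReal * h s' :=
    Finset.sum_le_sum fun s' _ => mul_le_mul_of_nonneg_left (hfh s') ENNReal.toReal_nonneg
  have := mul_le_mul_of_nonneg_left hsum hβ0
  linarith

lemma bellman_contract {S A : Type*} [Fintype S] (P : S → A → PMF S) (R : S → ℝ)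
    {β : ℝ} (hβ0 : 0 ≤ β) (π : S → A) {f h : S → ℝ} {C : ℝ}
    (hfh : ∀ s, |f s - h s| ≤ C) (s : S) :
    |bellman P R β π f s - bellman P R β π h s| ≤ β * C := by
  have hC : 0 ≤ C := le_trans (abs_nonneg _) (hfh s)
  unfold bellman
  rw [tsum_fintype, tsum_fintype]
  have hsub : ∑ s', ((P s (π s)) s').toReal * f s' - ∑ s', ((P s (π s)) s').toReal * h s' =
      ∑ s', ((P s (π s)) s').toReal * (f s' - h s') := by
    rw [← Finset.sum_sub_distrib]
    exact Finset.sum_congr rfl fun s' _ => by ring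
  have heq : (R s + β * ∑ s', ((P s (π s)) s').toReal * f s') -
      (R s + β * ∑ s', ((P s (π s)) s').toReal * h s') =
      β * ∑ s', ((P s (π s)) s').toReal * (f s' - h s') := by
    rw [← hsub]; ring
  rw [heq, abs_mul, abs_of_nonneg hβ0]
  have h1 : |∑ s', ((P s (π s)) s').toReal * (f s' - h s')| ≤ C := by
    calc |∑ s', ((P s (π s)) s').toReal * (f s' - h s')|
        ≤ ∑ s', |((P s (π s)) s').toReal * (f s' - h s')| := Finset.abs_sum_le_sum_abs _ _
      _ ≤ ∑ s', ((P s (π s)) s').toReal * C := by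
          apply Finset.sum_le_sum
          intro s' _
          rw [abs_mul, abs_of_nonneg ENNReal.toReal_nonneg]
          exact mul_le_mul_of_nonneg_left (hfh s') ENNReal.toReal_nonneg
      _ = C := by rw [← Finset.sum_mul, pmf_sum_toReal_eq_one, one_mul]
  exact mul_le_mul_of_nonneg_left h1 hβ0

/-- Existence of an optimal policy: if the state type `S` and the action type `A`
are finite and nonempty, then there exists a policy `π*` whose value function
dominates that of every policy at every state. Here `Val π` denotes the value
function `V^π` of policy `π`, i.e. the unique bounded fixed point of `T_π`. -/
theorem exists_optimal_policy
    {S A : Type*} [Fintype S] [Fintype A] [Nonempty S] [Nonempty A]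
    (P : S → A → PMF S) (R : S → ℝ)
    (β : ℝ) (hβ0 : 0 ≤ β) (hβ1 : β < 1)
    (Val : (S → A) → S → ℝ)
    (hValbdd : ∀ π : S → A, ∃ C : ℝ, ∀ s, |Val π s| ≤ C)
    (hValfix : ∀ (π : S → A) (s : S), Val π s = bellman P R β π (Val π) s) :
    ∃ πstar : S → A, ∀ (π : S → A) (s : S), Val π s ≤ Val πstar s := by
  classical
  -- For each state pick a policy maximizing the value at that state.
  have hchoice : ∀ s : S, ∃ π0 : S → A, ∀ π : S → A, Val π s ≤ Val π0 s := fun s =>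
    Finite.exists_max (fun π => Val π s)
  choose πs hπs using hchoice
  set g : S → ℝ := fun s => Val (πs s) s with hg
  set πstar : S → A := fun s => πs s s with hπstar
  refine ⟨πstar, ?_⟩
  -- It suffices to show g ≤ Val πstar.
  suffices hmain : ∀ s, g s ≤ Val πstar s by
    intro π s; exact le_trans (hπs s π) (hmain s)
  -- Key: g ≤ T_{πstar} g.
  have hkey : ∀ s, g s ≤ bellman P R β πstar g s := by
    intro s
    have h1 : g s = bellman P R β (πs s) (Val (πs s)) s := hValfix (πs s) s
    rw [h1]
    unfold bellman
    rw [tsum_fintype, tsum_fintype]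
    have : πstar s = πs s s := rfl
    rw [this]
    have hsum : ∑ s', ((P s (πs s s)) s').toReal * Val (πs s) s' ≤
        ∑ s', ((P s (πs s s)) s').toReal * g s' :=
      Finset.sum_le_sum fun s' _ =>
        mul_le_mul_of_nonneg_left (hπs s' (πs s)) ENNReal.toReal_nonneg
    have := mul_le_mul_of_nonneg_left hsum hβ0
    linarith
  -- Bound |g - Val πstar|.
  obtain ⟨Cv, hCv⟩ := hValbdd πstar
  obtain ⟨s0, hs0⟩ := Finite.exists_max (fun s => |g s|)
  set C : ℝ := |g s0| + Cv with hC
  have hgb : ∀ s, |g s - Val πstar s| ≤ C := fun s =>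
    le_trans (abs_sub _ _) (add_le_add (hs0 s) (hCv s))
  -- Iterates of the Bellman operator starting from g.
  set T := bellman P R β πstar with hT
  set f : ℕ → S → ℝ := fun n => T^[n] g with hf
  have hfix : ∀ s, T (Val πstar) s = Val πstar s := fun s => (hValfix πstar s).symm
  have hmono : ∀ n s, g s ≤ f n s := by
    intro n
    induction n with
    | zero => intro s; simp [hf]
    | succ n ih =>
      intro s
      have : f (n+1) = T (f n) := by
        simp [hf, Function.iterate_succ_apply']
      rw [this]
      exact le_trans (hkey s) (bellman_mono P R hβ0 πstar ih s)
  have hclose : ∀ n s, |f n s - Val πstar s| ≤ β ^ n * C := by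
    intro n
    induction n with
    | zero => intro s; simpa [hf] using hgb s
    | succ n ih =>
      intro s
      have h1 : f (n+1) = T (f n) := by
        simp [hf, Function.iterate_succ_apply']
      have h2 : |T (f n) s - T (Val πstar) s| ≤ β * (β ^ n * C) :=
        bellman_contract P R hβ0 πstar ih s
      rw [h1]
      calc |T (f n) s - Val πstar s| = |T (f n) s - T (Val πstar) s| := by rw [hfix s]
        _ ≤ β * (β ^ n * C) := h2
        _ = β ^ (n+1) * C := by ring
  intro s
  have hle : ∀ n, g s - Val πstar s ≤ β ^ n * C := by
    intro n
    calc g s - Val πstar s ≤ f n s - Val πstar s := by linarith [hmono n s]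
      _ ≤ |f n s - Val πstar s| := le_abs_self _
      _ ≤ β ^ n * C := hclose n s
  have htend : Filter.Tendsto (fun n => β ^ n * C) Filter.atTop (nhds 0) := by
    have := tendsto_pow_atTop_nhds_zero_of_lt_one hβ0 hβ1
    simpa using this.mul_const C
  have : g s - Val πstar s ≤ 0 := ge_of_tendsto' htend hle
  linarith
end

section
/- (Value of the switching policy dominates each base policy uniformly and is itself bounded.) Let π_1, …, π_n (n ≥ 1) be policies and let Π_ps(s) = π_{i*(s)}(s) with i*(s) attaining max_{1 ≤ i ≤ n} V^{π_i}(s). Then for every i and every state s, V^{π_i}(s) ≤ V^{Π_ps}(s) ≤ Rmax / (1 − β). -/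
lemma nonpos_of_forall_le_pow_mul {β C x : ℝ} (hβ0 : 0 ≤ β) (hβ1 : β < 1)
    (h : ∀ k : ℕ, x ≤ β ^ k * C) : x ≤ 0 := by
  have hlim : Filter.Tendsto (fun k : ℕ => β ^ k * C) Filter.atTop (nhds 0) := by
    simpa using (tendsto_pow_atTop_nhds_zero_of_lt_one hβ0 hβ1).mul_const C
  exact ge_of_tendsto' hlim h

lemma exists_forall_abs_apply_le_of_finite {ι S : Type*} [Finite ι] {V : ι → S → ℝ}
    (hV : ∀ i, ∃ C, ∀ s, |V i s| ≤ C) (σ : S → ι) : ∃ C, ∀ s, |V (σ s) s| ≤ C := by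
  choose g hg using hV
  obtain ⟨C, hC⟩ := Finite.exists_le g
  exact ⟨C, fun s => (hg (σ s) s).trans (hC (σ s))⟩

namespace PMF

variable {S : Type*}

lemma summable_toReal_mul (p : PMF S) {f : S → ℝ} {C : ℝ} (hf : ∀ s, |f s| ≤ C) :
    Summable fun s => (p s).toReal * f s := by
  refine Summable.of_norm_bounded (g := fun s => (p s).toReal * C)
    ((ENNReal.summable_toReal p.tsum_coe_ne_top).mul_right C) fun s => ?_
  rw [Real.norm_eq_abs, abs_mul, ENNReal.abs_toReal]
  exact mul_le_mul_of_nonneg_left (hf s) ENNReal.toReal_nonneg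

lemma tsum_toReal_mul_le (p : PMF S) {f : S → ℝ} {C c : ℝ} (hf : ∀ s, |f s| ≤ C)
    (hfc : ∀ s, f s ≤ c) : ∑' s, (p s).toReal * f s ≤ c :=
  calc ∑' s, (p s).toReal * f s
      ≤ ∑' s, (p s).toReal * c :=
        (p.summable_toReal_mul hf).tsum_le_tsum
          (fun s => mul_le_mul_of_nonneg_left (hfc s) ENNReal.toReal_nonneg)
          ((ENNReal.summable_toReal p.tsum_coe_ne_top).mul_right c)
    _ = c := by
        rw [tsum_mul_right, ← ENNReal.tsum_toReal_eq p.apply_ne_top, p.tsum_coe,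
          ENNReal.toReal_one, one_mul]

end PMF

section Bellman

variable {S A : Type*} (P : S → A → PMF S) (R : S → ℝ) (β : ℝ)

lemma bellman_congr_policy {π π' : S → A} (f : S → ℝ) {s : S} (h : π s = π' s) :
    bellman P R β π f s = bellman P R β π' f s := by
  simp only [bellman, h]

lemma bellman_const (π : S → A) (c : ℝ) (s : S) :
    bellman P R β π (fun _ => c) s = R s + β * c := by
  simp only [bellman, tsum_mul_right, ← ENNReal.tsum_toReal_eq (P s (π s)).apply_ne_top,
    PMF.tsum_coe, ENNReal.toReal_one, one_mul]

variable {P R β}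

lemma bellman_mono_s11 (hβ : 0 ≤ β) (π : S → A) {f g : S → ℝ} {Cf Cg : ℝ}
    (hf : ∀ s, |f s| ≤ Cf) (hg : ∀ s, |g s| ≤ Cg) (hfg : ∀ s, f s ≤ g s) (s : S) :
    bellman P R β π f s ≤ bellman P R β π g s := by
  have hsum := ((P s (π s)).summable_toReal_mul hf).tsum_le_tsum
    (fun t => mul_le_mul_of_nonneg_left (hfg t) ENNReal.toReal_nonneg)
    ((P s (π s)).summable_toReal_mul hg)
  simp only [bellman]
  gcongr

lemma bellman_sub (π : S → A) {f g : S → ℝ} {Cf Cg : ℝ}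
    (hf : ∀ s, |f s| ≤ Cf) (hg : ∀ s, |g s| ≤ Cg) (s : S) :
    bellman P R β π f s - bellman P R β π g s
      = β * ∑' t, ((P s (π s)) t).toReal * (f t - g t) := by
  simp only [bellman, mul_sub, Summable.tsum_sub ((P s (π s)).summable_toReal_mul hf)
    ((P s (π s)).summable_toReal_mul hg)]
  ring

theorem le_of_le_bellman_of_bellman_le (hβ0 : 0 ≤ β) (hβ1 : β < 1) (π : S → A)
    {f g : S → ℝ} (hf : ∃ C, ∀ s, |f s| ≤ C) (hg : ∃ C, ∀ s, |g s| ≤ C)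
    (hsub : ∀ s, f s ≤ bellman P R β π f s) (hsuper : ∀ s, bellman P R β π g s ≤ g s)
    (s : S) : f s ≤ g s := by
  obtain ⟨Cf, hCf⟩ := hf
  obtain ⟨Cg, hCg⟩ := hg
  have hdiff : ∀ t, |f t - g t| ≤ Cf + Cg := fun t =>
    (abs_sub _ _).trans (add_le_add (hCf t) (hCg t))
  have hcontract : ∀ k : ℕ, ∀ t, f t - g t ≤ β ^ k * (Cf + Cg) := by
    intro k
    induction k with
    | zero => exact fun t => by simpa using (le_abs_self _).trans (hdiff t)
    | succ k ih =>
      intro t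
      calc f t - g t ≤ bellman P R β π f t - bellman P R β π g t := by
            linarith [hsub t, hsuper t]
        _ = β * ∑' u, ((P t (π t)) u).toReal * (f u - g u) := bellman_sub π hCf hCg t
        _ ≤ β * (β ^ k * (Cf + Cg)) :=
            mul_le_mul_of_nonneg_left ((P t (π t)).tsum_toReal_mul_le hdiff ih) hβ0
        _ = β ^ (k + 1) * (Cf + Cg) := by ring
  exact sub_nonpos.mp (nonpos_of_forall_le_pow_mul hβ0 hβ1 fun k => hcontract k s)

end Bellman

theorem switching_value_dominates_and_bounded_general
    {S A : Type*}
    (P : S → A → PMF S) (R : S → ℝ) (Rmax : ℝ) (hR : ∀ s, |R s| ≤ Rmax)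
    (β : ℝ) (hβ0 : 0 ≤ β) (hβ1 : β < 1)
    (n : ℕ) (π : Fin n → S → A)
    (V : Fin n → S → ℝ)
    (hVbdd : ∀ i, ∃ C : ℝ, ∀ s, |V i s| ≤ C)
    (hVfix : ∀ i s, V i s = bellman P R β (π i) (V i) s)
    (istar : S → Fin n)
    (histar : ∀ s i, V i s ≤ V (istar s) s)
    (pps : S → A) (hpps : ∀ s, pps s = π (istar s) s)
    (Vps : S → ℝ) (hVpsbdd : ∃ C : ℝ, ∀ s, |Vps s| ≤ C)
    (hVpsfix : ∀ s, Vps s = bellman P R β pps Vps s) :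
    ∀ (i : Fin n) (s : S), V i s ≤ Vps s ∧ Vps s ≤ Rmax / (1 - β) := by
  set W : S → ℝ := fun s => V (istar s) s
  obtain ⟨CW, hCW⟩ := exists_forall_abs_apply_le_of_finite hVbdd istar
  have hW_sub : ∀ s, W s ≤ bellman P R β pps W s := fun s => by
    obtain ⟨C, hC⟩ := hVbdd (istar s)
    calc W s = bellman P R β pps (V (istar s)) s :=
          (hVfix (istar s) s).trans (bellman_congr_policy P R β _ (hpps s).symm)
      _ ≤ bellman P R β pps W s := bellman_mono_s11 hβ0 pps hC hCW (fun t => histar t _) s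
  have hL_super : ∀ s, bellman P R β pps (fun _ => Rmax / (1 - β)) s ≤ Rmax / (1 - β) :=
    fun s => by
      have hfix : Rmax + β * (Rmax / (1 - β)) = Rmax / (1 - β) := by
        field_simp [(sub_pos.mpr hβ1).ne']
        ring
      rw [bellman_const]
      linarith [(le_abs_self (R s)).trans (hR s)]
  have hW_le := le_of_le_bellman_of_bellman_le hβ0 hβ1 pps ⟨CW, hCW⟩ hVpsbdd hW_sub
    (fun s => (hVpsfix s).ge)
  have hVps_le := le_of_le_bellman_of_bellman_le hβ0 hβ1 pps hVpsbdd
    ⟨|Rmax / (1 - β)|, fun _ => le_rfl⟩ (fun s => (hVpsfix s).le) hL_super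
  exact fun i s => ⟨(histar s i).trans (hW_le s), hVps_le s⟩

/-- The value of the switching policy dominates each base policy uniformly and is
itself bounded: with `π_1, …, π_n` (`n ≥ 1`), value functions `V^{π_i}` (bounded
fixed points of the respective Bellman operators), and the switching policy
`Π_ps(s) = π_{i*(s)}(s)` where `i*(s)` attains `max_i V^{π_i}(s)`, we have
`V^{π_i}(s) ≤ V^{Π_ps}(s) ≤ Rmax / (1 − β)` for every `i` and every state `s`. -/
theorem switching_value_dominates_and_bounded
    {S A : Type*} [Nonempty S] [Nonempty A]
    (P : S → A → PMF S) (R : S → ℝ) (Rmax : ℝ) (hR : ∀ s, |R s| ≤ Rmax)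
    (β : ℝ) (hβ0 : 0 ≤ β) (hβ1 : β < 1)
    (n : ℕ) (hn : 1 ≤ n) (π : Fin n → S → A)
    (V : Fin n → S → ℝ)
    (hVbdd : ∀ i, ∃ C : ℝ, ∀ s, |V i s| ≤ C)
    (hVfix : ∀ i s, V i s = bellman P R β (π i) (V i) s)
    (istar : S → Fin n)
    (histar : ∀ s i, V i s ≤ V (istar s) s)
    (pps : S → A) (hpps : ∀ s, pps s = π (istar s) s)
    (Vps : S → ℝ) (hVpsbdd : ∃ C : ℝ, ∀ s, |Vps s| ≤ C)
    (hVpsfix : ∀ s, Vps s = bellman P R β pps Vps s) :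
    ∀ (i : Fin n) (s : S), V i s ≤ Vps s ∧ Vps s ≤ Rmax / (1 - β) :=
  switching_value_dominates_and_bounded_general P R Rmax hR β hβ0 hβ1 n π V hVbdd hVfix istar histar
    pps hpps Vps hVpsbdd hVpsfix
end
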